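/- For the same chain (Student-t Gibbs sampler with t ≥ 4, s² = t), for each fixed μ' the map μ ↦ p(μ'|μ) on [0,a] attains its minimum at μ = 0 or μ = a; specifically p(μ'|0) < p(μ'|a) if and only if |μ'| > h(a), where h(a) = { a² [ (1 + a²/t)^{t/(t+1)} − 1 ]^{−1} − t }^{1/2}. Consequently min_{|μ|≤a} p(μ'|μ) = p(μ'|a) for |μ'| ≤ h(a) and = p(μ'|0) for |μ'| > h(a). -/

import Mathlib

/-!
Write `p(μ'|μ) = C · g(1 + μ²/t)` with `g(x) = x^{t/2} (x + b)^{-(t+1)/2}` and `b = μ'²/t`.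
Since `g'(x)` has the sign of `t b - x`, `g` increases up to `x = t b` and decreases after it, so
on any interval it is minimised at an endpoint. Comparing the endpoints `x = 1` and
`x = X = 1 + a²/t`, and writing `q = X^{t/(t+1)}`, raising to the power `2/(t+1)` turns
`g(1) < g(X)` into `X + b < q (1 + b)`, which after `a² = t (X - 1)` reads `h(a)² < μ'²`.
-/

open MeasureTheory Real

noncomputable section

/-- Normalizing constant of the Student-t type transition density. -/
def studentC (t : ℝ) : ℝ :=
  Real.Gamma ((t + 1) / 2) / (Real.sqrt (t * Real.pi) * Real.Gamma (t / 2))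

/-- The transition density `p(μ'|μ)` of the two-step Gibbs sampler (with `s² = t`):
`p(μ'|μ) ∝ (1 + μ²/t)^{t/2} (1 + μ²/t + μ'²/t)^{−(t+1)/2}`. -/
def pdens (t μ μ' : ℝ) : ℝ :=
  studentC t * (1 + μ ^ 2 / t) ^ (t / 2) * (1 + μ ^ 2 / t + μ' ^ 2 / t) ^ (-(t + 1) / 2)

/-- The threshold `h(a)`. -/
def hthresh (t a : ℝ) : ℝ :=
  Real.sqrt (a ^ 2 * ((1 + a ^ 2 / t) ^ (t / (t + 1)) - 1)⁻¹ - t)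

def gibbsProfile (t b x : ℝ) : ℝ :=
  x ^ (t / 2) * (x + b) ^ (-(t + 1) / 2)

lemma pdens_eq_mul_gibbsProfile (t μ μ' : ℝ) :
    pdens t μ μ' = studentC t * gibbsProfile t (μ' ^ 2 / t) (1 + μ ^ 2 / t) := by
  rw [pdens, gibbsProfile, mul_assoc]

lemma studentC_pos {t : ℝ} (ht : 0 < t) : 0 < studentC t := by
  have hΓ₁ : 0 < Gamma ((t + 1) / 2) := Gamma_pos_of_pos (by linarith)
  have hΓ₂ : 0 < Gamma (t / 2) := Gamma_pos_of_pos (by linarith)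
  have hsqrt : 0 < √(t * π) := sqrt_pos.mpr (mul_pos ht pi_pos)
  unfold studentC
  positivity

section Profile

variable {t b : ℝ}

lemma hasDerivAt_gibbsProfile (hb : 0 ≤ b) {x : ℝ} (hx : 0 < x) :
    HasDerivAt (gibbsProfile t b)
      (x ^ (t / 2 - 1) * (x + b) ^ (-(t + 1) / 2 - 1) * ((t * b - x) / 2)) x := by
  have hxb : 0 < x + b := by linarith
  have hpow : HasDerivAt (fun y : ℝ => y ^ (t / 2)) (t / 2 * x ^ (t / 2 - 1)) x :=
    hasDerivAt_rpow_const (Or.inl hx.ne')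
  have hshift : HasDerivAt (fun y : ℝ => (y + b) ^ (-(t + 1) / 2))
      (-(t + 1) / 2 * (x + b) ^ (-(t + 1) / 2 - 1)) x := by
    simpa using ((hasDerivAt_id x).add_const b).rpow_const (p := -(t + 1) / 2) (Or.inl hxb.ne')
  refine (hpow.mul hshift).congr_deriv ?_
  rw [rpow_sub_one hx.ne', rpow_sub_one hxb.ne']
  field_simp
  ring

lemma continuousOn_gibbsProfile (hb : 0 ≤ b) {D : Set ℝ} (hD : D ⊆ Set.Ioi 0) :
    ContinuousOn (gibbsProfile t b) D :=
  fun _ hx => (hasDerivAt_gibbsProfile hb (hD hx)).continuousAt.continuousWithinAt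

lemma monotoneOn_gibbsProfile (hb : 0 ≤ b) : MonotoneOn (gibbsProfile t b) (Set.Ioc 0 (t * b)) := by
  have hD : Set.Ioc 0 (t * b) ⊆ Set.Ioi 0 := Set.Ioc_subset_Ioi_self
  refine monotoneOn_of_hasDerivWithinAt_nonneg (convex_Ioc 0 (t * b))
    (continuousOn_gibbsProfile hb hD)
    (fun x hx => (hasDerivAt_gibbsProfile hb (hD (interior_subset hx))).hasDerivWithinAt)
    fun x hx => ?_
  obtain ⟨hx₀, hxtb⟩ := interior_subset hx
  have hxb : 0 < x + b := by linarith
  have hslope : 0 ≤ (t * b - x) / 2 := by linarith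
  positivity

lemma antitoneOn_gibbsProfile (hb : 0 ≤ b) :
    AntitoneOn (gibbsProfile t b) (Set.Ioi 0 ∩ Set.Ici (t * b)) := by
  have hD : Set.Ioi 0 ∩ Set.Ici (t * b) ⊆ Set.Ioi 0 := Set.inter_subset_left
  refine antitoneOn_of_hasDerivWithinAt_nonpos ((convex_Ioi 0).inter (convex_Ici (t * b)))
    (continuousOn_gibbsProfile hb hD)
    (fun x hx => (hasDerivAt_gibbsProfile hb (hD (interior_subset hx))).hasDerivWithinAt)
    fun x hx => ?_
  obtain ⟨hx₀, hxtb⟩ := interior_subset hx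
  have hxb : 0 < x + b := by linarith [hx₀.out]
  exact mul_nonpos_of_nonneg_of_nonpos (mul_pos (rpow_pos_of_pos hx₀ _) (rpow_pos_of_pos hxb _)).le
    (by linarith [hxtb.out])

lemma min_gibbsProfile_le (hb : 0 ≤ b) {x y z : ℝ} (hx : 0 < x) (hxz : x ≤ z) (hzy : z ≤ y) :
    min (gibbsProfile t b x) (gibbsProfile t b y) ≤ gibbsProfile t b z := by
  rcases le_total z (t * b) with hz | hz
  · exact (min_le_left _ _).trans
      (monotoneOn_gibbsProfile hb ⟨hx, hxz.trans hz⟩ ⟨hx.trans_le hxz, hz⟩ hxz)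
  · have hy : 0 < y := hx.trans_le (hxz.trans hzy)
    exact (min_le_right _ _).trans
      (antitoneOn_gibbsProfile hb ⟨hx.trans_le hxz, hz⟩ ⟨hy, hz.trans hzy⟩ hzy)

lemma gibbsProfile_one_lt_iff (ht : 0 < t + 1) (hb : 0 ≤ b) {X : ℝ} (hX : 0 < X) :
    gibbsProfile t b 1 < gibbsProfile t b X ↔
      X - X ^ (t / (t + 1)) < b * (X ^ (t / (t + 1)) - 1) := by
  set q := X ^ (t / (t + 1))
  have hp : 0 < (t + 1) / 2 := by linarith
  have hq : 0 < q := rpow_pos_of_pos hX _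
  have hXb : 0 < X + b := by linarith
  have hXq : X ^ (t / 2) = q ^ ((t + 1) / 2) := by
    rw [← rpow_mul hX.le]
    congr 1
    field_simp
  have hleft : gibbsProfile t b 1 = ((1 + b)⁻¹) ^ ((t + 1) / 2) := by
    rw [gibbsProfile, one_rpow, one_mul, neg_div, rpow_neg (by linarith), inv_rpow (by linarith)]
  have hright : gibbsProfile t b X = (q * (X + b)⁻¹) ^ ((t + 1) / 2) := by
    rw [gibbsProfile, hXq, neg_div, rpow_neg hXb.le, mul_rpow hq.le (inv_nonneg.mpr hXb.le),
      inv_rpow hXb.le]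
  rw [hleft, hright, rpow_lt_rpow_iff (by positivity) (by positivity) hp, ← div_eq_mul_inv,
    inv_lt_iff_one_lt_mul₀ (by linarith), div_mul_eq_mul_div, one_lt_div hXb]
  constructor <;> intro h <;> linarith

end Profile

lemma hthresh_lt_abs_iff {t a : ℝ} (ht : 0 < t) (ha : a ≠ 0) (μ' : ℝ) :
    hthresh t a < |μ'| ↔
      (1 + a ^ 2 / t) - (1 + a ^ 2 / t) ^ (t / (t + 1))
        < μ' ^ 2 / t * ((1 + a ^ 2 / t) ^ (t / (t + 1)) - 1) := by
  set X := 1 + a ^ 2 / t with hX_def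
  set q := X ^ (t / (t + 1))
  have hX : 1 < X := by
    have : 0 < a ^ 2 / t := by positivity
    linarith
  have hq : 1 < q := one_lt_rpow hX (by positivity)
  have hqX : q ≤ X := by
    simpa using rpow_le_rpow_of_exponent_le hX.le ((div_le_one (by linarith)).mpr (by linarith))
  have hsq : a ^ 2 * (q - 1)⁻¹ - t = t * (X - q) / (q - 1) := by
    have ha2 : a ^ 2 = t * (X - 1) := by
      rw [hX_def]
      field_simp
      ring
    rw [ha2]
    field_simp [(sub_pos.mpr hq).ne']
    ring
  have hsq_nonneg : 0 ≤ t * (X - q) / (q - 1) :=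
    div_nonneg (mul_nonneg ht.le (sub_nonneg.mpr hqX)) (sub_pos.mpr hq).le
  rw [hthresh, hsq, ← sqrt_sq_eq_abs, sqrt_lt_sqrt_iff hsq_nonneg, div_lt_iff₀ (sub_pos.mpr hq),
    div_mul_eq_mul_div, lt_div_iff₀ ht, mul_comm]

lemma pdens_zero_lt_iff {t a : ℝ} (ht : 0 < t) (ha : a ≠ 0) (μ' : ℝ) :
    pdens t 0 μ' < pdens t a μ' ↔ hthresh t a < |μ'| := by
  have hgibbs := gibbsProfile_one_lt_iff (t := t) (by linarith) (by positivity : 0 ≤ μ' ^ 2 / t)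
    (by positivity : 0 < 1 + a ^ 2 / t)
  rw [hthresh_lt_abs_iff ht ha, ← hgibbs, pdens_eq_mul_gibbsProfile, pdens_eq_mul_gibbsProfile,
    mul_lt_mul_iff_right₀ (studentC_pos ht)]
  norm_num

lemma min_pdens_le {t a μ : ℝ} (ht : 0 < t) (hμ : |μ| ≤ a) (μ' : ℝ) :
    min (pdens t 0 μ') (pdens t a μ') ≤ pdens t μ μ' := by
  have hμa : μ ^ 2 / t ≤ a ^ 2 / t :=
    div_le_div_of_nonneg_right (sq_le_sq' (abs_le.mp hμ).1 (abs_le.mp hμ).2) ht.le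
  rw [pdens_eq_mul_gibbsProfile, pdens_eq_mul_gibbsProfile, pdens_eq_mul_gibbsProfile,
    ← mul_min_of_nonneg _ _ (studentC_pos ht).le]
  refine mul_le_mul_of_nonneg_left (min_gibbsProfile_le (by positivity) (by positivity) ?_ ?_)
    (studentC_pos ht).le
  · simpa using (by positivity : 0 ≤ μ ^ 2 / t)
  · linarith

/-- **Minorization for the Student-t Gibbs sampler (Proposition 6.2).** For `t ≥ 4`,
`s² = t` and `a > 0`: for each fixed `μ'` the map `μ ↦ p(μ'|μ)` on `[−a, a]` attains
its minimum at `μ = 0` or `μ = a`; moreover `p(μ'|0) < p(μ'|a)` iff `|μ'| > h(a)`.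
Consequently `min_{|μ|≤a} p(μ'|μ) = p(μ'|a)` for `|μ'| ≤ h(a)` and `= p(μ'|0)` for
`|μ'| > h(a)`. -/
theorem student_gibbs_minorization (t a : ℝ) (ht : 4 ≤ t) (ha : 0 < a) :
    (∀ μ' : ℝ, pdens t 0 μ' < pdens t a μ' ↔ hthresh t a < |μ'|)
    ∧ (∀ μ' μ : ℝ, |μ| ≤ a → min (pdens t 0 μ') (pdens t a μ') ≤ pdens t μ μ')
    ∧ (∀ μ' μ : ℝ, |μ| ≤ a →
        (|μ'| ≤ hthresh t a → pdens t a μ' ≤ pdens t μ μ')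
        ∧ (hthresh t a < |μ'| → pdens t 0 μ' ≤ pdens t μ μ')) := by
  have ht₀ : 0 < t := by linarith
  have hcompare := pdens_zero_lt_iff ht₀ ha.ne'
  refine ⟨hcompare, fun μ' μ hμ => min_pdens_le ht₀ hμ μ', fun μ' μ hμ => ?_⟩
  have hmin := min_pdens_le ht₀ hμ μ'
  refine ⟨fun hle => ?_, fun hlt => ?_⟩
  · rwa [min_eq_right (not_lt.mp ((hcompare μ').not.mpr hle.not_gt))] at hmin
  · rwa [min_eq_left ((hcompare μ').mpr hlt).le] at hmin

end
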